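/- arXiv:1208.3799 — 3 statements merged into one kernel-verified Lean document; each statement's English description precedes it below -/
import Mathlib

section
/- Let βⁿ be the symmetric B-spline of order n ((n+1)-fold self-convolution of χ_{[-1/2,1/2]}). Then √((2n+2)/12) · β^{2n+1}(0) → 1/√(2π) as n → ∞; equivalently β^{2n+1}(0) ~ √(6/(π(2n+2))) as n → ∞. -/
open MeasureTheory Real

/-- The symmetric B-spline of order `n`: the `(n+1)`-fold self-convolution of the
indicator of `[-1/2, 1/2]`. -/
noncomputable def beta : ℕ → ℝ → ℝ
  | 0 => Set.indicator (Set.Icc (-(1/2) : ℝ) (1/2)) 1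
  | (n+1) => fun x => ∫ y in (0:ℝ)..1, beta n (x - y + 1/2)

/-!
Since `β⁰` is the indicator of `[-1/2, 1/2]` and `βⁿ⁺¹ = β⁰ ⋆ βⁿ`, the Fourier transform of `βⁿ`
is `sinc (π ξ) ^ (n + 1)`, and Fourier inversion gives `β²ⁿ⁺¹(0) = ∫ sinc (π ξ) ^ (2n + 2) dξ`.
The substitution `ξ = t / (π √m)`, `m = 2n + 2`, turns the integrand into `sinc (t / √m) ^ m`.
It tends to `exp (-t² / 6)` because `sinc u = 1 - u² / 6 + O(u⁴)`, and it is dominated by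
`8 / (1 + t²)` because `sinc² u ≤ 1 / (1 + u² / 4)` (from `sinc u = sinc (u / 2) cos (u / 2)`)
and Bernoulli's inequality. Dominated convergence and `∫ exp (-t² / 6) dt = √(6π)` conclude.
-/

open Filter Topology Convolution FourierTransform

namespace Real

lemma sinc_eq_sinc_half_mul_cos (x : ℝ) : sinc x = sinc (x / 2) * cos (x / 2) := by
  rcases eq_or_ne x 0 with rfl | hx
  · simp
  rw [sinc_of_ne_zero hx, sinc_of_ne_zero (div_ne_zero hx two_ne_zero)]
  conv_lhs => rw [← mul_div_cancel₀ x (two_ne_zero (α := ℝ)), sin_two_mul]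
  field_simp

lemma sinc_sq_le_inv_one_add_sq_div_four (x : ℝ) : sinc x ^ 2 ≤ (1 + x ^ 2 / 4)⁻¹ := by
  rcases le_or_gt |x| 2 with hx | hx
  · have hcos_nonneg : 0 ≤ cos (x / 2) := cos_nonneg_of_mem_Icc (by
      constructor <;> linarith [abs_le.1 hx, pi_gt_three])
    have hcos : cos (x / 2) ≤ 1 / √((x / 2) ^ 2 + 1) :=
      cos_le_one_div_sqrt_sq_add_one (by linarith [abs_le.1 hx, pi_gt_three])
        (by linarith [abs_le.1 hx, pi_gt_three])
    calc sinc x ^ 2 = sinc (x / 2) ^ 2 * cos (x / 2) ^ 2 := by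
          rw [sinc_eq_sinc_half_mul_cos, mul_pow]
      _ ≤ 1 * (1 / √((x / 2) ^ 2 + 1)) ^ 2 := by
          gcongr
          · exact (sq_le_one_iff_abs_le_one _).2 (abs_sinc_le_one _)
      _ = (1 + x ^ 2 / 4)⁻¹ := by
          rw [one_mul, div_pow, sq_sqrt (by positivity)]; ring
  · have hx0 : x ≠ 0 := by rintro rfl; norm_num at hx
    calc sinc x ^ 2 ≤ (|x|⁻¹) ^ 2 := by
          rw [← sq_abs]
          gcongr
          rw [sinc_of_ne_zero hx0, abs_div]
          exact (div_le_div_of_nonneg_right (abs_sin_le_one x) (abs_nonneg x)).trans_eq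
            (one_div _)
      _ ≤ (1 + x ^ 2 / 4)⁻¹ := by
          rw [inv_pow, sq_abs]
          gcongr
          nlinarith [sq_abs x]

lemma sinc_pow_two_mul_le (x : ℝ) (k : ℕ) : sinc x ^ (2 * k) ≤ (1 + k * (x ^ 2 / 4))⁻¹ := by
  calc sinc x ^ (2 * k) = (sinc x ^ 2) ^ k := pow_mul _ _ _
    _ ≤ ((1 + x ^ 2 / 4)⁻¹) ^ k := by gcongr; exact sinc_sq_le_inv_one_add_sq_div_four x
    _ = ((1 + x ^ 2 / 4) ^ k)⁻¹ := inv_pow _ _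
    _ ≤ (1 + k * (x ^ 2 / 4))⁻¹ := by
        gcongr
        exact one_add_mul_le_pow (by nlinarith [sq_nonneg x]) k

lemma integrable_sinc_pow {m : ℕ} (hm : 2 ≤ m) : Integrable fun x => sinc x ^ m := by
  refine (integrable_inv_one_add_sq.const_mul 4).mono' ?_ (.of_forall fun x => ?_)
  · exact (continuous_sinc.pow m).aestronglyMeasurable
  calc ‖sinc x ^ m‖ ≤ sinc x ^ 2 := by
        rw [norm_pow, norm_eq_abs, ← sq_abs]
        exact pow_le_pow_of_le_one (abs_nonneg _) (abs_sinc_le_one x) hm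
    _ ≤ (1 + x ^ 2 / 4)⁻¹ := sinc_sq_le_inv_one_add_sq_div_four x
    _ ≤ 4 * (1 + x ^ 2)⁻¹ := by
        rw [← div_eq_mul_inv, inv_eq_one_div, div_le_div_iff₀ (by positivity) (by positivity)]
        nlinarith [sq_nonneg x]

lemma sinc_bound {x : ℝ} (hx : |x| ≤ 1) : |sinc x - (1 - x ^ 2 / 6)| ≤ |x| ^ 4 / 100 := by
  rcases eq_or_ne x 0 with rfl | hx0
  · simp
  have habs : 0 < |x| := abs_pos.2 hx0
  have h := sin_bound hx
  rw [sinc_of_ne_zero hx0]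
  have : sin x / x - (1 - x ^ 2 / 6) = (sin x - (x - x ^ 3 / 6)) / x := by field_simp
  rw [this, abs_div, div_le_iff₀ habs]
  calc |sin x - (x - x ^ 3 / 6)| ≤ |x| ^ 5 / 100 := h
    _ = |x| ^ 4 / 100 * |x| := by ring

lemma tendsto_sinc_sub_one_div_sq :
    Tendsto (fun x => (sinc x - 1) / x ^ 2) (𝓝[≠] 0) (𝓝 (-(1 / 6))) := by
  rw [tendsto_iff_norm_sub_tendsto_zero]
  have hlim : Tendsto (fun x : ℝ => |x| ^ 2 / 100) (𝓝[≠] 0) (𝓝 0) := by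
    have : Tendsto (fun x : ℝ => |x| ^ 2 / 100) (𝓝 0) (𝓝 0) := by
      simpa using ((continuous_abs.pow 2).div_const 100).tendsto (0 : ℝ)
    exact this.mono_left nhdsWithin_le_nhds
  refine squeeze_zero_norm' ?_ hlim
  filter_upwards [self_mem_nhdsWithin,
    mem_nhdsWithin_of_mem_nhds (Metric.closedBall_mem_nhds (0 : ℝ) one_pos)]
    with x (hx0 : x ≠ 0) hx1
  have hx1 : |x| ≤ 1 := by simpa using hx1
  have hsq : 0 < |x| ^ 2 := by positivity
  have : (sinc x - 1) / x ^ 2 - -(1 / 6) = (sinc x - (1 - x ^ 2 / 6)) / x ^ 2 := by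
    field_simp; ring
  rw [norm_norm, this, norm_eq_abs, abs_div, abs_pow, div_le_iff₀ hsq]
  calc |sinc x - (1 - x ^ 2 / 6)| ≤ |x| ^ 4 / 100 := sinc_bound hx1
    _ = |x| ^ 2 / 100 * |x| ^ 2 := by ring

lemma tendsto_sinc_div_sqrt_pow (t : ℝ) :
    Tendsto (fun m : ℕ => sinc (t / √m) ^ m) atTop (𝓝 (exp (-(1 / 6) * t ^ 2))) := by
  refine (tendsto_one_add_pow_exp_of_tendsto ?_).congr fun m => by rw [add_sub_cancel]
  rcases eq_or_ne t 0 with rfl | ht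
  · simp
  have hsqrt : Tendsto (fun m : ℕ => √(m : ℝ)) atTop atTop :=
    tendsto_sqrt_atTop.comp tendsto_natCast_atTop_atTop
  have hu : Tendsto (fun m : ℕ => t / √(m : ℝ)) atTop (𝓝[≠] 0) := by
    refine tendsto_nhdsWithin_iff.2 ⟨tendsto_const_nhds.div_atTop hsqrt, ?_⟩
    filter_upwards [eventually_ne_atTop 0] with m hm
    exact div_ne_zero ht (sqrt_pos.2 (by positivity)).ne'
  rw [show -(1 / 6) * t ^ 2 = t ^ 2 * -(1 / 6) by ring]
  refine ((tendsto_sinc_sub_one_div_sq.comp hu).const_mul (t ^ 2)).congr' ?_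
  filter_upwards [eventually_ne_atTop 0] with m hm
  have hm' : (0 : ℝ) < m := by positivity
  simp only [Function.comp_apply, div_pow, sq_sqrt hm'.le]
  field_simp

lemma sqrt_mul_integral_sinc_pi_mul_pow (m : ℕ) :
    √m * ∫ ξ, sinc (π * ξ) ^ m = π⁻¹ * ∫ t, sinc (t / √m) ^ m := by
  rw [Measure.integral_comp_mul_left (fun x => sinc x ^ m),
    Measure.integral_comp_div (fun x => sinc x ^ m), abs_inv, abs_of_pos pi_pos,
    abs_of_nonneg (sqrt_nonneg _), smul_eq_mul, smul_eq_mul]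
  ring

lemma norm_sinc_div_sqrt_pow_le {k : ℕ} (hk : k ≠ 0) (t : ℝ) :
    ‖sinc (t / √(2 * k)) ^ (2 * k)‖ ≤ 8 * (1 + t ^ 2)⁻¹ := by
  rw [norm_eq_abs, abs_of_nonneg ((even_two_mul k).pow_nonneg _)]
  calc sinc (t / √(2 * k)) ^ (2 * k) ≤ (1 + k * ((t / √(2 * k)) ^ 2 / 4))⁻¹ :=
        sinc_pow_two_mul_le _ k
    _ = (1 + t ^ 2 / 8)⁻¹ := by
        rw [div_pow, sq_sqrt (by positivity)]
        field_simp
        ring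
    _ ≤ 8 * (1 + t ^ 2)⁻¹ := by
        rw [← div_eq_mul_inv, inv_eq_one_div, div_le_div_iff₀ (by positivity) (by positivity)]
        nlinarith [sq_nonneg t]

lemma tendsto_sqrt_mul_integral_sinc_pi_mul_pow :
    Tendsto (fun k : ℕ => √(2 * k / 12) * ∫ ξ, sinc (π * ξ) ^ (2 * k)) atTop
      (𝓝 (1 / √(2 * π))) := by
  have hlim : Tendsto (fun k : ℕ => ∫ t, sinc (t / √(2 * k)) ^ (2 * k)) atTop
      (𝓝 (∫ t, exp (-(1 / 6) * t ^ 2))) := by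
    refine tendsto_integral_filter_of_dominated_convergence _
      (.of_forall fun k => ?_) ?_ (integrable_inv_one_add_sq.const_mul 8) (.of_forall fun t => ?_)
    · exact ((continuous_sinc.comp (continuous_id.div_const _)).pow _).aestronglyMeasurable
    · filter_upwards [eventually_ne_atTop 0] with k hk
      exact .of_forall (norm_sinc_div_sqrt_pow_le hk)
    · have := (tendsto_sinc_div_sqrt_pow t).comp (tendsto_id.const_mul_atTop' two_pos)
      simpa [Function.comp_def] using this
  rw [integral_gaussian] at hlim
  have hrw : ∀ k : ℕ, √(2 * k / 12) * ∫ ξ, sinc (π * ξ) ^ (2 * k)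
      = (√12)⁻¹ * π⁻¹ * ∫ t, sinc (t / √(2 * k)) ^ (2 * k) := by
    intro k
    have := sqrt_mul_integral_sinc_pi_mul_pow (2 * k)
    push_cast at this
    rw [sqrt_div' _ (by norm_num : (0:ℝ) ≤ 12), div_eq_inv_mul, mul_assoc, this, mul_assoc]
  simp_rw [hrw]
  convert hlim.const_mul ((√12)⁻¹ * π⁻¹) using 2
  rw [one_div, ← sqrt_inv, ← sqrt_inv, ← sqrt_sq (inv_nonneg.2 pi_pos.le),
    ← sqrt_mul (by positivity), ← sqrt_mul (by positivity)]
  congr 1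
  field_simp
  ring

end Real

lemma Complex.ofReal_convolution {G : Type*} [MeasurableSpace G] [Sub G] (μ : Measure G)
    (f g : G → ℝ) (x : G) :
    ((f ⋆[ContinuousLinearMap.lsmul ℝ ℝ, μ] g) x : ℂ) =
      ((fun t => (f t : ℂ)) ⋆[ContinuousLinearMap.mul ℂ ℂ, μ] fun t => (g t : ℂ)) x := by
  rw [convolution_lsmul, convolution_mul, ← integral_complex_ofReal]
  simp

lemma beta_succ_apply (n : ℕ) (x : ℝ) :
    beta (n + 1) x = ∫ u in (x - 1/2)..(x + 1/2), beta n u := by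
  have h := intervalIntegral.integral_comp_sub_left (beta n) (a := 0) (b := 1) (x + 1 / 2)
  simp only [sub_zero, show x + 1 / 2 - 1 = x - 1 / 2 by ring] at h
  rw [← h]
  simp only [beta, sub_add_eq_add_sub]

lemma beta_succ_eq_convolution (n : ℕ) : beta (n + 1) = beta 0 ⋆ beta n := by
  ext x
  have hind : (fun t => beta 0 t • beta n (x - t)) =
      Set.indicator (Set.Icc (-(1/2)) (1/2)) fun t => beta n (x - t) := by
    ext t
    simp only [beta, smul_eq_mul, Set.indicator_apply]
    split_ifs <;> simp
  rw [beta_succ_apply, convolution_lsmul, hind, integral_indicator measurableSet_Icc,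
    integral_Icc_eq_integral_Ioc, ← intervalIntegral.integral_of_le (by norm_num),
    intervalIntegral.integral_comp_sub_left (beta n), sub_neg_eq_add]

lemma integrable_beta (n : ℕ) : Integrable (beta n) := by
  have h0 : Integrable (beta 0) :=
    (integrableOn_const measure_Icc_lt_top.ne).integrable_indicator measurableSet_Icc
  induction n with
  | zero => exact h0
  | succ n ih => rw [beta_succ_eq_convolution]; exact h0.integrable_convolution _ ih

lemma continuous_beta_succ (n : ℕ) : Continuous (beta (n + 1)) := by
  have hF := (integrable_beta n).continuous_primitive 0
  have : beta (n + 1) = fun x =>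
      (∫ u in (0:ℝ)..(x + 1/2), beta n u) - ∫ u in (0:ℝ)..(x - 1/2), beta n u := by
    funext x
    rw [beta_succ_apply, intervalIntegral.integral_interval_sub_left
      (integrable_beta n).intervalIntegrable (integrable_beta n).intervalIntegrable]
  rw [this]
  exact (hF.comp (continuous_add_const _)).sub (hF.comp (continuous_sub_right _))

lemma fourier_beta_zero (ξ : ℝ) : 𝓕 (fun x => (beta 0 x : ℂ)) ξ = sinc (π * ξ) := by
  set c : ℂ := -2 * π * ξ * Complex.I
  have hind : (fun v : ℝ => Complex.exp (↑(-2 * π * v * ξ) * Complex.I) • (beta 0 v : ℂ)) =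
      Set.indicator (Set.Icc (-(1/2) : ℝ) (1/2)) fun v => Complex.exp (c * v) := by
    ext v
    simp only [beta, smul_eq_mul, Set.indicator_apply]
    split_ifs
    · simp only [c, Pi.one_apply, Complex.ofReal_one, mul_one]
      congr 1
      push_cast
      ring
    · simp
  rw [Real.fourier_real_eq_integral_exp_smul, hind, integral_indicator measurableSet_Icc,
    integral_Icc_eq_integral_Ioc, ← intervalIntegral.integral_of_le (by norm_num)]
  rcases eq_or_ne ξ 0 with rfl | hξ
  · norm_num [c]
  have hπξ : π * ξ ≠ 0 := mul_ne_zero pi_ne_zero hξ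
  rw [integral_exp_mul_complex (by simp [c, hξ, pi_ne_zero]), sinc_of_ne_zero hπξ]
  have h₁ : c * ↑(1 / 2 : ℝ) = -(π * ξ : ℂ) * Complex.I := by simp only [c]; push_cast; ring
  have h₂ : c * ↑(-(1 / 2) : ℝ) = (π * ξ : ℂ) * Complex.I := by simp only [c]; push_cast; ring
  rw [h₁, h₂, Complex.exp_mul_I, Complex.exp_mul_I, Complex.cos_neg, Complex.sin_neg]
  simp only [c]
  push_cast
  field_simp
  ring

lemma fourier_beta (n : ℕ) (ξ : ℝ) :
    𝓕 (fun x => (beta n x : ℂ)) ξ = (sinc (π * ξ) : ℂ) ^ (n + 1) := by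
  induction n generalizing ξ with
  | zero => rw [zero_add, pow_one, fourier_beta_zero]
  | succ n ih =>
    have hconv : (fun x => (beta (n + 1) x : ℂ)) =
        (fun x => (beta 0 x : ℂ)) ⋆[ContinuousLinearMap.mul ℂ ℂ] fun x => (beta n x : ℂ) := by
      ext x; rw [beta_succ_eq_convolution, Complex.ofReal_convolution]
    have hmul :
        𝓕 ((fun x => (beta 0 x : ℂ)) ⋆[ContinuousLinearMap.mul ℂ ℂ] fun x => (beta n x : ℂ)) ξ
          = 𝓕 (fun x => (beta 0 x : ℂ)) ξ * 𝓕 (fun x => (beta n x : ℂ)) ξ :=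
      Real.fourier_mul_convolution_eq (integrable_beta 0).ofReal (integrable_beta n).ofReal ξ
    rw [hconv, hmul, fourier_beta_zero, ih, pow_succ' _ (n + 1)]

lemma beta_succ_zero_eq_integral (n : ℕ) : beta (n + 1) 0 = ∫ ξ, sinc (π * ξ) ^ (n + 2) := by
  have hF :
      𝓕 (fun x => (beta (n + 1) x : ℂ)) = fun ξ => ((sinc (π * ξ) ^ (n + 2) : ℝ) : ℂ) := by
    ext ξ; rw [fourier_beta]; push_cast; rfl
  have hFint : Integrable (𝓕 fun x => (beta (n + 1) x : ℂ)) := by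
    rw [hF]
    exact ((Real.integrable_sinc_pow (by omega)).comp_mul_left' pi_ne_zero).ofReal
  have hinv := (integrable_beta (n + 1)).ofReal.fourierInv_fourier_eq hFint
    (Complex.continuous_ofReal.comp (continuous_beta_succ n)).continuousAt (v := 0)
  rw [Real.fourierInv_eq, hF] at hinv
  simp only [inner_zero_right, AddChar.map_zero_eq_one, one_smul, integral_complex_ofReal] at hinv
  exact_mod_cast hinv.symm

theorem beta_asymptotics :
    Filter.Tendsto (fun n : ℕ => Real.sqrt ((2 * (n : ℝ) + 2) / 12) * beta (2 * n + 1) 0)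
      Filter.atTop (nhds (1 / Real.sqrt (2 * π))) := by
  refine (tendsto_sqrt_mul_integral_sinc_pi_mul_pow.comp (tendsto_add_atTop_nat 1)).congr
    fun n => ?_
  rw [Function.comp_apply, beta_succ_zero_eq_integral]
  push_cast
  ring_nf
end

section
/- lim_{n → ∞, n ∈ ℕ} √n · (1/π) ∫_{-∞}^{∞} (sin t / t)^{2n} dt = √(3/π). -/
/-!
Laplace's method. Near `0`, `sinc2 t = 1 - t²/3 + O(t⁴)`, so after the substitution `t = s/√n`
the integrand `sinc2 (s/√n) ^ n` tends to `exp (-s²/3)` and is dominated by `exp (-s²/4)` on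
`|s| ≤ √n`; dominated convergence gives `√n ∫_{-1}^{1} sinc2 ^ n → ∫ exp (-s²/3) = √(3π)`.
Outside `[-1, 1]` the bound `sinc2 t ≤ t⁻²` makes the integral `O(1/n)`, negligible after
multiplying by `√n`.
-/

open MeasureTheory Real

/-- `(sin t / t)^2`, extended continuously by `1` at `t = 0`. -/
noncomputable def sinc2 (t : ℝ) : ℝ := if t = 0 then 1 else Real.sin t ^ 2 / t ^ 2

open Filter Set Topology

lemma sinc2_of_ne_zero {t : ℝ} (h : t ≠ 0) : sinc2 t = sin t ^ 2 / t ^ 2 := if_neg h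

lemma sinc2_nonneg (t : ℝ) : 0 ≤ sinc2 t := by
  unfold sinc2
  split_ifs <;> positivity

lemma sinc2_le_one (t : ℝ) : sinc2 t ≤ 1 := by
  rcases eq_or_ne t 0 with rfl | h
  · simp [sinc2]
  · rw [sinc2_of_ne_zero h, div_le_one (by positivity)]
    exact sin_sq_le_sq

lemma sinc2_le_two_div_one_add_sq (t : ℝ) : sinc2 t ≤ 2 / (1 + t ^ 2) := by
  rcases eq_or_ne t 0 with rfl | h
  · simp [sinc2]
  · rw [sinc2_of_ne_zero h, div_le_div_iff₀ (by positivity) (by positivity)]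
    nlinarith [sin_sq_le_sq (x := t), sin_sq_le_one t, sq_nonneg t]

lemma sinc2_neg (t : ℝ) : sinc2 (-t) = sinc2 t := by
  simp [sinc2, sin_neg]

lemma measurable_sinc2 : Measurable sinc2 :=
  Measurable.ite (measurableSet_singleton 0) measurable_const
    ((measurable_sin.pow_const 2).div (measurable_id.pow_const 2))

lemma integrable_sinc2_pow {n : ℕ} (hn : n ≠ 0) : Integrable fun t ↦ sinc2 t ^ n := by
  refine (integrable_inv_one_add_sq.const_mul 2).mono'
    (measurable_sinc2.pow_const n).aestronglyMeasurable (.of_forall fun t ↦ ?_)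
  rw [norm_of_nonneg (pow_nonneg (sinc2_nonneg t) n), ← div_eq_mul_inv]
  exact (pow_le_of_le_one (sinc2_nonneg t) (sinc2_le_one t) hn).trans
    (sinc2_le_two_div_one_add_sq t)

lemma abs_sin_sq_sub_le {t : ℝ} (ht : |t| ≤ 1) :
    |sin t ^ 2 - (t - t ^ 3 / 6) ^ 2| ≤ t ^ 6 / 50 := by
  have hsum : |sin t + (t - t ^ 3 / 6)| ≤ 2 * |t| := by
    have : |t - t ^ 3 / 6| ≤ |t| := by
      rw [show t - t ^ 3 / 6 = t * (1 - t ^ 2 / 6) by ring, abs_mul]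
      refine mul_le_of_le_one_right (abs_nonneg t) (abs_le.2 ⟨?_, ?_⟩) <;>
        nlinarith [sq_abs t, abs_nonneg t, sq_nonneg t]
    linarith [abs_add_le (sin t) (t - t ^ 3 / 6), abs_sin_le_abs (x := t)]
  calc |sin t ^ 2 - (t - t ^ 3 / 6) ^ 2|
      = |sin t - (t - t ^ 3 / 6)| * |sin t + (t - t ^ 3 / 6)| := by
        rw [← abs_mul]; ring_nf
    _ ≤ |t| ^ 5 / 100 * (2 * |t|) := by
        gcongr
        exact sin_bound ht
    _ = t ^ 6 / 50 := by
        rw [show |t| ^ 5 / 100 * (2 * |t|) = |t| ^ 6 / 50 by ring, pow_abs,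
          abs_of_nonneg (by positivity)]

lemma abs_sinc2_sub_le {t : ℝ} (ht : |t| ≤ 1) :
    |sinc2 t - (1 - t ^ 2 / 3)| ≤ t ^ 4 / 20 := by
  rcases eq_or_ne t 0 with rfl | h
  · simp [sinc2]
  have ht2 : 0 < t ^ 2 := by positivity
  have hexpand : sinc2 t - (1 - t ^ 2 / 3)
      = (sin t ^ 2 - (t - t ^ 3 / 6) ^ 2) / t ^ 2 + t ^ 4 / 36 := by
    rw [sinc2_of_ne_zero h]
    field_simp
    ring
  have hquot : |(sin t ^ 2 - (t - t ^ 3 / 6) ^ 2) / t ^ 2| ≤ t ^ 4 / 50 := by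
    rw [abs_div, abs_of_pos ht2, div_le_iff₀ ht2]
    linarith [abs_sin_sq_sub_le ht]
  rw [hexpand]
  calc _ ≤ t ^ 4 / 50 + |t ^ 4 / 36| := (abs_add_le _ _).trans (by gcongr)
    _ ≤ t ^ 4 / 20 := by
        rw [abs_of_nonneg (by positivity)]
        nlinarith [pow_nonneg (sq_nonneg t) 2]

lemma sinc2_le_one_sub {t : ℝ} (ht : |t| ≤ 1) : sinc2 t ≤ 1 - t ^ 2 / 4 := by
  have h := (abs_le.1 (abs_sinc2_sub_le ht)).2
  have : t ^ 4 ≤ t ^ 2 := by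
    rw [show t ^ 4 = t ^ 2 * t ^ 2 by ring]
    exact mul_le_of_le_one_right (sq_nonneg t)
      (by rwa [← sq_abs, sq_le_one_iff_abs_le_one, abs_abs])
  linarith [sq_nonneg t]

lemma tendsto_sqrt_natCast_atTop : Tendsto (fun n : ℕ ↦ √(n : ℝ)) atTop atTop :=
  tendsto_sqrt_atTop.comp tendsto_natCast_atTop_atTop

lemma abs_div_sqrt_le_one {x s : ℝ} (hx : 0 < x) (hs : |s| ≤ √x) : |s / √x| ≤ 1 := by
  rwa [abs_div, abs_of_pos (sqrt_pos.2 hx), div_le_one (sqrt_pos.2 hx)]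

lemma mul_div_sqrt_sq {x : ℝ} (hx : 0 < x) (s : ℝ) : x * (s / √x) ^ 2 = s ^ 2 := by
  rw [div_pow, sq_sqrt hx.le]
  field_simp

lemma sinc2_div_sqrt_pow_le {n : ℕ} (hn : n ≠ 0) {s : ℝ} (hs : |s| ≤ √n) :
    sinc2 (s / √n) ^ n ≤ exp (-(1 / 4) * s ^ 2) := by
  have hn' : (0 : ℝ) < n := by positivity
  calc sinc2 (s / √n) ^ n ≤ exp (-((s / √n) ^ 2 / 4)) ^ n := by
        gcongr
        · exact sinc2_nonneg _
        · exact (sinc2_le_one_sub (abs_div_sqrt_le_one hn' hs)).trans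
            (by linarith [add_one_le_exp (-((s / √n) ^ 2 / 4))])
    _ = exp (-(1 / 4) * s ^ 2) := by
        rw [← exp_nat_mul, ← mul_div_sqrt_sq hn' s]
        ring_nf

lemma tendsto_sinc2_div_sqrt_pow (s : ℝ) :
    Tendsto (fun n : ℕ ↦ sinc2 (s / √n) ^ n) atTop (𝓝 (exp (-(1 / 3) * s ^ 2))) := by
  have hsmall : ∀ᶠ n : ℕ in atTop, |s| ≤ √n ∧ n ≠ 0 :=
    (tendsto_sqrt_natCast_atTop.eventually_ge_atTop |s|).and (eventually_ne_atTop 0)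
  -- with `u = s / √n`, `n (sinc2 u - 1) + s²/3 = n (sinc2 u - (1 - u²/3)) = O(n u⁴) = O(1/n)`
  have hmul : Tendsto (fun n : ℕ ↦ n * (sinc2 (s / √n) - 1)) atTop (𝓝 (-(1 / 3) * s ^ 2)) := by
    rw [← tendsto_sub_nhds_zero_iff]
    refine squeeze_zero_norm' ?_ (tendsto_const_div_atTop_nhds_zero_nat (s ^ 4 / 20))
    filter_upwards [hsmall] with n ⟨hs, hn⟩
    have hn' : (0 : ℝ) < n := by positivity
    have hsq := mul_div_sqrt_sq hn' s
    rw [norm_eq_abs, le_div_iff₀ hn']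
    calc |n * (sinc2 (s / √n) - 1) - -(1 / 3) * s ^ 2| * n
        = |sinc2 (s / √n) - (1 - (s / √n) ^ 2 / 3)| * (n : ℝ) ^ 2 := by
          rw [← hsq, show (n : ℝ) * (sinc2 (s / √n) - 1) - -(1 / 3) * (n * (s / √n) ^ 2)
            = n * (sinc2 (s / √n) - (1 - (s / √n) ^ 2 / 3)) by ring, abs_mul, abs_of_pos hn']
          ring
      _ ≤ (s / √n) ^ 4 / 20 * (n : ℝ) ^ 2 := by
          gcongr
          exact abs_sinc2_sub_le (abs_div_sqrt_le_one hn' hs)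
      _ = s ^ 4 / 20 := by rw [show s ^ 4 = (s ^ 2) ^ 2 by ring, ← hsq]; ring
  simpa using Real.tendsto_one_add_pow_exp_of_tendsto hmul

lemma setIntegral_compl_Icc_of_even {f : ℝ → ℝ} (hf : ∀ x, f (-x) = f x) {a : ℝ} (ha : 0 ≤ a) :
    ∫ x in (Icc (-a) a)ᶜ, f x = 2 * ∫ x in Ioi a, f x := by
  have hfold : (Icc (-a) a)ᶜ.indicator f = fun x ↦ (Ioi a).indicator f |x| := by
    ext x
    have hfx : f |x| = f x := by rcases abs_choice x with h | h <;> rw [h]; exact hf x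
    simp only [indicator_apply, mem_compl_iff, mem_Icc, ← abs_le, not_le, mem_Ioi, hfx]
  rw [← integral_indicator measurableSet_Icc.compl, hfold, integral_comp_abs,
    setIntegral_indicator measurableSet_Ioi, Ioi_inter_Ioi, max_eq_right ha]

lemma setIntegral_compl_Icc_sinc2_pow_le {n : ℕ} (hn : n ≠ 0) :
    ∫ t in (Icc (-1) 1)ᶜ, sinc2 t ^ n ≤ 2 / n := by
  have hn1 : (1 : ℝ) ≤ n := by exact_mod_cast Nat.one_le_iff_ne_zero.2 hn
  have hexp : -(2 * (n : ℝ)) < -1 := by linarith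
  have hpow : ∀ t ∈ Ioi (1 : ℝ), sinc2 t ^ n ≤ t ^ (-(2 * (n : ℝ))) := fun t ht ↦ by
    have ht0 : t ≠ 0 := (zero_lt_one.trans ht).ne'
    rw [rpow_neg (zero_lt_one.trans ht).le,
      show 2 * (n : ℝ) = ((2 * n : ℕ) : ℝ) by push_cast; ring, rpow_natCast, pow_mul, ← inv_pow]
    gcongr
    · exact sinc2_nonneg t
    · rw [sinc2_of_ne_zero ht0, div_eq_mul_inv]
      exact mul_le_of_le_one_left (by positivity) (sin_sq_le_one t)
  rw [setIntegral_compl_Icc_of_even (fun t ↦ by rw [sinc2_neg]) zero_le_one]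
  calc 2 * ∫ t in Ioi 1, sinc2 t ^ n ≤ 2 * ∫ t in Ioi (1 : ℝ), t ^ (-(2 * (n : ℝ))) := by
        refine mul_le_mul_of_nonneg_left ?_ zero_le_two
        exact setIntegral_mono_on (integrable_sinc2_pow hn).integrableOn
          (integrableOn_Ioi_rpow_of_lt hexp one_pos) measurableSet_Ioi hpow
    _ = 2 / (2 * n - 1) := by
        rw [integral_Ioi_rpow_of_lt hexp one_pos, one_rpow,
          show -(2 * (n : ℝ)) + 1 = -(2 * n - 1) by ring, div_neg, neg_div, neg_neg, mul_one_div]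
    _ ≤ 2 / n := by gcongr; linarith

lemma integral_indicator_Icc_comp_div (f : ℝ → ℝ) {c : ℝ} (hc : 0 < c) :
    ∫ s, (Icc (-c) c).indicator (fun s ↦ f (s / c)) s = c * ∫ t in Icc (-1) 1, f t := by
  have hfold : (Icc (-c) c).indicator (fun s ↦ f (s / c))
      = fun s ↦ (Icc (-1) 1).indicator f (s / c) := by
    ext s
    simp only [indicator_apply, mem_Icc, le_div_iff₀ hc, div_le_iff₀ hc, neg_mul, one_mul]
  rw [hfold, Measure.integral_comp_div, abs_of_pos hc, smul_eq_mul,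
    integral_indicator measurableSet_Icc]

lemma tendsto_sqrt_mul_setIntegral_Icc_sinc2_pow :
    Tendsto (fun n : ℕ ↦ √n * ∫ t in Icc (-1) 1, sinc2 t ^ n) atTop (𝓝 √(3 * π)) := by
  set F : ℕ → ℝ → ℝ := fun n ↦ (Icc (-√n) √n).indicator fun s ↦ sinc2 (s / √n) ^ n
  have hsubst : ∀ᶠ n : ℕ in atTop, ∫ s, F n s = √n * ∫ t in Icc (-1) 1, sinc2 t ^ n := by
    filter_upwards [eventually_ne_atTop 0] with n hn
    exact integral_indicator_Icc_comp_div (fun t ↦ sinc2 t ^ n)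
      (sqrt_pos.2 (Nat.cast_pos.2 (Nat.pos_of_ne_zero hn)))
  have hmeas : ∀ᶠ n : ℕ in atTop, AEStronglyMeasurable (F n) :=
    .of_forall fun n ↦ (((measurable_sinc2.comp (measurable_id.div_const _)).pow_const n).indicator
      measurableSet_Icc).aestronglyMeasurable
  have hbound : ∀ᶠ n : ℕ in atTop, ∀ᵐ s, ‖F n s‖ ≤ exp (-(1 / 4) * s ^ 2) := by
    filter_upwards [eventually_ne_atTop 0] with n hn
    refine .of_forall fun s ↦ ?_
    rw [norm_indicator_eq_indicator_norm]
    refine indicator_apply_le' (fun hs ↦ ?_) fun _ ↦ (exp_pos _).le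
    rw [norm_of_nonneg (pow_nonneg (sinc2_nonneg _) n)]
    exact sinc2_div_sqrt_pow_le hn (abs_le.2 hs)
  have hlim : ∀ᵐ s, Tendsto (fun n ↦ F n s) atTop (𝓝 (exp (-(1 / 3) * s ^ 2))) := by
    refine .of_forall fun s ↦ (tendsto_sinc2_div_sqrt_pow s).congr' ?_
    filter_upwards [tendsto_sqrt_natCast_atTop.eventually_ge_atTop |s|] with n hn
    have hs : s ∈ Icc (-√(n : ℝ)) √n := abs_le.1 hn
    exact (indicator_of_mem hs fun s ↦ sinc2 (s / √n) ^ n).symm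
  have h := tendsto_integral_filter_of_dominated_convergence _ hmeas hbound
    (integrable_exp_neg_mul_sq (by norm_num)) hlim
  rw [integral_gaussian, show π / (1 / 3) = 3 * π by ring] at h
  exact h.congr' hsubst

lemma tendsto_sqrt_mul_setIntegral_compl_Icc_sinc2_pow :
    Tendsto (fun n : ℕ ↦ √n * ∫ t in (Icc (-1) 1)ᶜ, sinc2 t ^ n) atTop (𝓝 0) := by
  have hdecay : Tendsto (fun n : ℕ ↦ 2 / √n) atTop (𝓝 0) :=
    tendsto_const_nhds.div_atTop tendsto_sqrt_natCast_atTop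
  refine tendsto_of_tendsto_of_tendsto_of_le_of_le' tendsto_const_nhds hdecay
    (.of_forall fun n ↦ mul_nonneg (sqrt_nonneg _)
      (setIntegral_nonneg measurableSet_Icc.compl fun t _ ↦ pow_nonneg (sinc2_nonneg t) n)) ?_
  filter_upwards [eventually_ne_atTop 0] with n hn
  have hn' : (0 : ℝ) < n := by positivity
  calc √n * ∫ t in (Icc (-1) 1)ᶜ, sinc2 t ^ n ≤ √n * (2 / n) :=
        mul_le_mul_of_nonneg_left (setIntegral_compl_Icc_sinc2_pow_le hn) (sqrt_nonneg _)
    _ = 2 / √n := by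
        field_simp
        rw [sq_sqrt hn'.le]

lemma tendsto_sqrt_mul_integral_sinc2_pow :
    Tendsto (fun n : ℕ ↦ √n * ∫ t, sinc2 t ^ n) atTop (𝓝 √(3 * π)) := by
  have hsplit : ∀ᶠ n : ℕ in atTop, (√n * ∫ t in Icc (-1) 1, sinc2 t ^ n)
      + √n * (∫ t in (Icc (-1) 1)ᶜ, sinc2 t ^ n) = √n * ∫ t, sinc2 t ^ n := by
    filter_upwards [eventually_ne_atTop 0] with n hn
    rw [← mul_add, integral_add_compl measurableSet_Icc (integrable_sinc2_pow hn)]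
  simpa using (tendsto_sqrt_mul_setIntegral_Icc_sinc2_pow.add
    tendsto_sqrt_mul_setIntegral_compl_Icc_sinc2_pow).congr' hsplit

theorem sinc_integral_asymptotics_nat :
    Filter.Tendsto (fun n : ℕ => Real.sqrt n * ((1 / π) * ∫ t : ℝ, sinc2 t ^ n))
      Filter.atTop (nhds (Real.sqrt (3 / π))) := by
  have hconst : 1 / π * √(3 * π) = √(3 / π) := by
    rw [show 3 / π = 3 * π / π ^ 2 by field_simp, sqrt_div' _ (sq_nonneg π), sqrt_sq pi_pos.le]
    ring
  rw [← hconst]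
  exact (tendsto_sqrt_mul_integral_sinc2_pow.const_mul (1 / π)).congr fun n ↦ by ring
end

section
/- For all real t with 0 < |t| ≤ 6/√5, sin²t / t² ≤ exp(-t²/3). -/
open Real

theorem sinc_sq_le_exp (t : ℝ) (ht : 0 < |t|) (ht' : |t| ≤ 6 / Real.sqrt 5) :
    Real.sin t ^ 2 / t ^ 2 ≤ Real.exp (-t ^ 2 / 3) := by
  have htne : t ≠ 0 := fun h => by simp [h] at ht
  have hpi : (0:ℝ) < π := Real.pi_pos
  have hsqrt5 : (0:ℝ) < Real.sqrt 5 := Real.sqrt_pos.2 (by norm_num)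
  have ht2 : t ^ 2 ≤ 36 / 5 := by
    have h1 : |t| ^ 2 ≤ (6 / Real.sqrt 5) ^ 2 := by
      have := abs_nonneg t
      nlinarith
    rw [sq_abs, div_pow, Real.sq_sqrt (by norm_num : (0:ℝ) ≤ 5)] at h1
    linarith
  have hpisq : t ^ 2 < π ^ 2 := by
    have : (3:ℝ) < π := Real.pi_gt_three
    nlinarith
  -- the partial products
  set P : ℕ → ℝ := fun n => ∏ j ∈ Finset.range n, ((1:ℝ) - (t/π) ^ 2 / ((j:ℝ) + 1) ^ 2) with hP
  -- each factor is nonneg and ≤ exp of minus the term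
  have hfac_nonneg : ∀ j : ℕ, (0:ℝ) ≤ 1 - (t/π) ^ 2 / ((j:ℝ) + 1) ^ 2 := by
    intro j
    have hj1 : (1:ℝ) ≤ ((j:ℝ) + 1) ^ 2 := by
      have : (1:ℝ) ≤ (j:ℝ) + 1 := by
        have := Nat.cast_nonneg (α := ℝ) j
        linarith
      nlinarith
    have : (t/π) ^ 2 ≤ 1 := by
      rw [div_pow, div_le_one (by positivity)]
      linarith
    have h2 : (t/π) ^ 2 / ((j:ℝ) + 1) ^ 2 ≤ 1 := by
      rw [div_le_one (by positivity)]
      linarith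
    linarith
  have hP_nonneg : ∀ n, 0 ≤ P n := fun n =>
    Finset.prod_nonneg fun j _ => hfac_nonneg j
  have hP_le : ∀ n, P n ≤ Real.exp (-(t/π) ^ 2 * ∑ j ∈ Finset.range n, 1 / ((j:ℝ) + 1) ^ 2) := by
    intro n
    have : P n ≤ ∏ j ∈ Finset.range n, Real.exp (-((t/π) ^ 2 / ((j:ℝ) + 1) ^ 2)) := by
      apply Finset.prod_le_prod (fun j _ => hfac_nonneg j)
      intro j _
      have := Real.add_one_le_exp (-((t/π) ^ 2 / ((j:ℝ) + 1) ^ 2))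
      linarith
    rw [← Real.exp_sum] at this
    refine this.trans (le_of_eq ?_)
    congr 1
    rw [Finset.mul_sum]
    apply Finset.sum_congr rfl
    intro j _
    ring
  -- P n tends to sin t / t
  have heuler := Real.tendsto_euler_sin_prod (t / π)
  rw [mul_div_cancel₀ t (ne_of_gt hpi)] at heuler
  have hPt : Filter.Tendsto P Filter.atTop (nhds (Real.sin t / t)) := by
    have := heuler.const_mul (1 / t)
    simp only [← mul_assoc] at this
    have heq : (fun n : ℕ => 1 / t * t * ∏ j ∈ Finset.range n, ((1:ℝ) - (t/π) ^ 2 / ((j:ℝ) + 1) ^ 2)) = P := by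
      funext n
      rw [one_div_mul_cancel htne, one_mul]
    rw [heq] at this
    convert this using 2
    rw [div_eq_mul_one_div, mul_comm]
  -- sum tends to π²/6
  have hbasel : Filter.Tendsto (fun n : ℕ => ∑ j ∈ Finset.range n, 1 / ((j:ℝ) + 1) ^ 2)
      Filter.atTop (nhds (π ^ 2 / 6)) := by
    have h := hasSum_zeta_two
    have h2 : HasSum (fun n : ℕ => 1 / ((n:ℝ) + 1) ^ 2) (π ^ 2 / 6) := by
      have h3 : HasSum (fun n : ℕ => (1:ℝ) / (n:ℝ) ^ 2)
          ((π ^ 2 / 6) + ∑ i ∈ Finset.range 1, (1:ℝ) / (i:ℝ) ^ 2) := by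
        simpa using h
      have := (hasSum_nat_add_iff (f := fun n : ℕ => (1:ℝ) / (n:ℝ) ^ 2) 1).2 h3
      simpa using this
    exact h2.tendsto_sum_nat
  -- the exponential bound tends to exp (-t²/6)
  have hEt : Filter.Tendsto (fun n : ℕ => Real.exp (-(t/π) ^ 2 * ∑ j ∈ Finset.range n, 1 / ((j:ℝ) + 1) ^ 2))
      Filter.atTop (nhds (Real.exp (-t ^ 2 / 6))) := by
    have h1 : Filter.Tendsto (fun n : ℕ => -(t/π) ^ 2 * ∑ j ∈ Finset.range n, 1 / ((j:ℝ) + 1) ^ 2)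
        Filter.atTop (nhds (-(t/π) ^ 2 * (π ^ 2 / 6))) := hbasel.const_mul _
    have h2 : -(t/π) ^ 2 * (π ^ 2 / 6) = -t ^ 2 / 6 := by
      field_simp
    rw [h2] at h1
    exact (Real.continuous_exp.tendsto _).comp h1
  have key : Real.sin t / t ≤ Real.exp (-t ^ 2 / 6) :=
    le_of_tendsto_of_tendsto' hPt hEt hP_le
  have key0 : 0 ≤ Real.sin t / t :=
    le_of_tendsto_of_tendsto' tendsto_const_nhds hPt (fun n => hP_nonneg n)
  have : (Real.sin t / t) ^ 2 ≤ Real.exp (-t ^ 2 / 6) ^ 2 := by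
    apply pow_le_pow_left₀ key0 key
  rw [div_pow] at this
  refine this.trans (le_of_eq ?_)
  rw [sq, ← Real.exp_add]
  ring_nf
end
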